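/- For n_1 > n_2 + 1 ≥ κ + 1, the least eigenvalue of the complement of B_1(n_1,n_2;κ) is strictly greater than the least eigenvalue of the complement of B_1(n_1−1,n_2+1;κ). Consequently, among all B_1(n_1,n_2;κ) with n_1+n_2 = n fixed and n_1 ≥ n_2 ≥ κ, the least eigenvalue of the complement is minimized at (n_1,n_2) = (⌈n/2⌉, ⌊n/2⌋). -/

import Mathlib

open Classical in
/-- The adjacency matrix of a simple graph, with real entries. -/
noncomputable def adjMat {V : Type*} [Fintype V] (G : SimpleGraph V) : Matrix V V ℝ :=
  Matrix.of fun u v => if G.Adj u v then 1 else 0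

/-- The least eigenvalue of a real matrix. -/
noncomputable def minEig {V : Type*} [Fintype V] (A : Matrix V V ℝ) : ℝ :=
  sInf {μ : ℝ | ∃ x : V → ℝ, x ≠ 0 ∧ A.mulVec x = μ • x}

/-- `B1 n1 n2 κ` is the graph obtained from disjoint complete graphs `K_{n1}` and
`K_{n2}` by adding `κ` edges forming a matching between them (the `i`-th vertex of the
first clique is matched to the `i`-th vertex of the second, for `i < κ`). -/
def B1 (n1 n2 κ : ℕ) : SimpleGraph (Fin n1 ⊕ Fin n2) where
  Adj u v :=
    Sum.elim
      (fun a : Fin n1 => Sum.elim (fun b : Fin n1 => a ≠ b) (fun b : Fin n2 => (a : ℕ) = (b : ℕ) ∧ (a : ℕ) < κ) v)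
      (fun a : Fin n2 => Sum.elim (fun b : Fin n1 => (b : ℕ) = (a : ℕ) ∧ (b : ℕ) < κ) (fun b : Fin n2 => a ≠ b) v) u
  symm := by
    constructor
    rintro (a | a) (b | b) h
    · exact h.symm
    · exact h
    · exact h
    · exact h.symm
  loopless := by constructor; rintro (a | a) h <;> exact h rfl

/-! The complement of `B1 n1 n2 κ` is the complete bipartite graph `K_{n1,n2}` minus a
`κ`-matching. For an eigenvalue `μ ∉ {0, ±1}`, every coordinate of an eigenvector is determined
by the two side sums `S`, `S'`, and these solve a `2 × 2` linear system with determinant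
`(μ² - 1)(μ⁴ - T μ² + D)`, where `T = n1 n2 - 2κ + 1` and `D = (n1 - κ)(n2 - κ)`; conversely
a kernel vector of that system lifts to an eigenvector. So the least eigenvalue is `-√λ`, with
`λ > 1` the largest root of `ν² - T ν + D`. Moving one vertex from the larger to the smaller side
turns this quadratic into `ν² - T ν + D - (n1 - n2 - 1)(ν - 1)`, which is negative at `λ`; hence
`λ` grows and the least eigenvalue drops, and iterating the move reaches the balanced split. -/

open Matrix

noncomputable def largestRoot (T D : ℝ) : ℝ := (T + √(T ^ 2 - 4 * D)) / 2

section largestRoot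

variable {T D ν : ℝ}

lemma largestRoot_isRoot (h : ν ^ 2 - T * ν + D ≤ 0) :
    largestRoot T D ^ 2 - T * largestRoot T D + D = 0 := by
  have := Real.sq_sqrt (show 0 ≤ T ^ 2 - 4 * D by nlinarith [sq_nonneg (2 * ν - T)])
  unfold largestRoot
  linear_combination this / 4

lemma le_largestRoot (h : ν ^ 2 - T * ν + D ≤ 0) : ν ≤ largestRoot T D := by
  have : 2 * ν - T ≤ √(T ^ 2 - 4 * D) := Real.le_sqrt_of_sq_le (by linarith)
  unfold largestRoot
  linarith

lemma lt_largestRoot (h : ν ^ 2 - T * ν + D < 0) : ν < largestRoot T D := by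
  have : 2 * ν - T < √(T ^ 2 - 4 * D) := Real.lt_sqrt_of_sq_lt (by linarith)
  unfold largestRoot
  linarith

end largestRoot

noncomputable def radiusSqComplB1 (a b k : ℝ) : ℝ :=
  largestRoot (a * b - 2 * k + 1) ((a - k) * (b - k))

section radiusSqComplB1

variable {a b k : ℝ}

lemma radiusSqComplB1_quad_one_neg (hk : 0 < k) (h : k + 2 < a + b) :
    1 ^ 2 - (a * b - 2 * k + 1) * 1 + (a - k) * (b - k) < 0 := by
  nlinarith

lemma one_lt_radiusSqComplB1 (hk : 0 < k) (h : k + 2 < a + b) : 1 < radiusSqComplB1 a b k :=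
  lt_largestRoot (radiusSqComplB1_quad_one_neg hk h)

lemma radiusSqComplB1_isRoot (hk : 0 < k) (h : k + 2 < a + b) :
    radiusSqComplB1 a b k ^ 2 - (a * b - 2 * k + 1) * radiusSqComplB1 a b k +
      (a - k) * (b - k) = 0 :=
  largestRoot_isRoot (radiusSqComplB1_quad_one_neg hk h).le

lemma radiusSqComplB1_lt_sub_one_add_one (hk : 0 < k) (h : k + 2 < a + b) (hab : b + 1 < a) :
    radiusSqComplB1 a b k < radiusSqComplB1 (a - 1) (b + 1) k := by
  have h1 := one_lt_radiusSqComplB1 hk h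
  have hroot := radiusSqComplB1_isRoot hk h
  apply lt_largestRoot
  nlinarith

end radiusSqComplB1

lemma Fin.sum_ite_val_lt {m κ : ℕ} (hκ : κ ≤ m) (a b : ℝ) :
    ∑ j : Fin m, (if (j : ℕ) < κ then a else b) = κ * a + (m - κ) * b := by
  rw [Finset.sum_ite, Finset.sum_const, Finset.sum_const, Finset.filter_not,
    Finset.card_sdiff_of_subset (Finset.filter_subset _ _), Fin.card_filter_val_lt,
    min_eq_right hκ]
  simp [Nat.cast_sub hκ]

lemma Fin.sum_ite_val_eq_and {m κ : ℕ} (hκ : κ ≤ m) (i : ℕ) (f : Fin m → ℝ) :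
    ∑ j : Fin m, (if (j : ℕ) = i ∧ i < κ then f j else 0) =
      if h : i < κ then f ⟨i, h.trans_le hκ⟩ else 0 := by
  split_ifs with h
  · rw [Finset.sum_eq_single_of_mem ⟨i, h.trans_le hκ⟩ (Finset.mem_univ _)]
    · simp [h]
    · intro j _ hj
      rw [if_neg fun hji => hj (Fin.ext hji.1)]
  · simp [h]

section matchedEigen

/-! Eigenvalue equations of `K_{m,m'}` minus the matching `i ↔ i` for `i < κ`, written for the
two sides `y`, `z` separately. -/

variable {κ m m' : ℕ} {μ : ℝ}

lemma sq_sub_one_mul_eigen_eq_ite (hm : κ ≤ m) (hm' : κ ≤ m') {y : Fin m → ℝ} {z : Fin m' → ℝ}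
    (hy : ∀ i, μ * y i = ∑ j, z j - if h : (i : ℕ) < κ then z ⟨i, h.trans_le hm'⟩ else 0)
    (hz : ∀ j, μ * z j = ∑ i, y i - if h : (j : ℕ) < κ then y ⟨j, h.trans_le hm⟩ else 0)
    (i : Fin m) :
    (μ ^ 2 - 1) * (μ * y i) =
      if (i : ℕ) < κ then μ * (μ * ∑ j, z j - ∑ i, y i) else (μ ^ 2 - 1) * ∑ j, z j := by
  have hyi := hy i
  by_cases hi : (i : ℕ) < κ
  · have hzi := hz ⟨i, hi.trans_le hm'⟩
    simp only [hi, dite_true, if_true] at hyi hzi ⊢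
    linear_combination μ * (μ * hyi) - μ * hzi
  · simp only [hi, dite_false, if_false, sub_zero] at hyi ⊢
    rw [hyi]

lemma classConst_eigen_eq (hm' : κ ≤ m') {s t : ℝ}
    (hsum : κ * (μ * (μ * s - t)) + (m' - κ) * ((μ ^ 2 - 1) * s) = μ * (μ ^ 2 - 1) * t)
    (i : Fin m) :
    (∑ j : Fin m', if (j : ℕ) < κ then μ * (μ * s - t) else (μ ^ 2 - 1) * s) -
        (if h : (i : ℕ) < κ then
          (if ((⟨i, h.trans_le hm'⟩ : Fin m') : ℕ) < κ then μ * (μ * s - t) else (μ ^ 2 - 1) * s)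
        else 0) =
      μ * if (i : ℕ) < κ then μ * (μ * t - s) else (μ ^ 2 - 1) * t := by
  rw [Fin.sum_ite_val_lt hm', hsum]
  split_ifs <;> ring

end matchedEigen

section B1

variable {n1 n2 κ : ℕ}

@[simp] lemma B1_adj_inl_inl {i i' : Fin n1} :
    (B1 n1 n2 κ).Adj (.inl i) (.inl i') ↔ i ≠ i' := Iff.rfl

@[simp] lemma B1_adj_inr_inr {j j' : Fin n2} :
    (B1 n1 n2 κ).Adj (.inr j) (.inr j') ↔ j ≠ j' := Iff.rfl

@[simp] lemma B1_adj_inl_inr {i : Fin n1} {j : Fin n2} :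
    (B1 n1 n2 κ).Adj (.inl i) (.inr j) ↔ (i : ℕ) = j ∧ (i : ℕ) < κ := Iff.rfl

@[simp] lemma B1_adj_inr_inl {i : Fin n1} {j : Fin n2} :
    (B1 n1 n2 κ).Adj (.inr j) (.inl i) ↔ (i : ℕ) = j ∧ (i : ℕ) < κ := Iff.rfl

lemma mulVec_adjMat_compl_B1_inl (hκ : κ ≤ n2) (x : Fin n1 ⊕ Fin n2 → ℝ) (i : Fin n1) :
    (adjMat (B1 n1 n2 κ)ᶜ *ᵥ x) (.inl i) =
      ∑ j, x (.inr j) - if h : (i : ℕ) < κ then x (.inr ⟨i, h.trans_le hκ⟩) else 0 := by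
  rw [← Fin.sum_ite_val_eq_and hκ _ fun j => x (.inr j)]
  simp only [mulVec, dotProduct, adjMat, SimpleGraph.compl_adj, ne_eq, of_apply, ite_mul, one_mul,
    zero_mul, Fintype.sum_sum_type, Sum.inl.injEq, B1_adj_inl_inl, Decidable.not_not, not_and_self,
    ↓reduceIte, Finset.sum_const_zero, reduceCtorEq, not_false_eq_true, B1_adj_inl_inr, not_and,
    not_lt, true_and, zero_add]
  rw [← Finset.sum_sub_distrib]
  refine Finset.sum_congr rfl fun j _ => ?_
  split_ifs <;> first | omega | simp

lemma mulVec_adjMat_compl_B1_inr (hκ : κ ≤ n1) (x : Fin n1 ⊕ Fin n2 → ℝ) (j : Fin n2) :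
    (adjMat (B1 n1 n2 κ)ᶜ *ᵥ x) (.inr j) =
      ∑ i, x (.inl i) - if h : (j : ℕ) < κ then x (.inl ⟨j, h.trans_le hκ⟩) else 0 := by
  rw [← Fin.sum_ite_val_eq_and hκ _ fun i => x (.inl i)]
  simp only [mulVec, dotProduct, adjMat, SimpleGraph.compl_adj, ne_eq, of_apply, ite_mul, one_mul,
    zero_mul, Fintype.sum_sum_type, reduceCtorEq, not_false_eq_true, B1_adj_inr_inl, not_and,
    not_lt, true_and, Sum.inr.injEq, B1_adj_inr_inr, Decidable.not_not, not_and_self, ↓reduceIte,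
    Finset.sum_const_zero, add_zero]
  rw [← Finset.sum_sub_distrib]
  refine Finset.sum_congr rfl fun i _ => ?_
  split_ifs <;> first | omega | simp

lemma eigenvalue_poly_eq_zero (hκ1 : κ ≤ n1) (hκ2 : κ ≤ n2) {μ : ℝ} {x : Fin n1 ⊕ Fin n2 → ℝ}
    (hx : x ≠ 0) (h : adjMat (B1 n1 n2 κ)ᶜ *ᵥ x = μ • x) :
    μ * (μ ^ 2 - 1) * ((μ ^ 2) ^ 2 - (n1 * n2 - 2 * κ + 1) * μ ^ 2 + (n1 - κ) * (n2 - κ)) = 0 := by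
  have hy : ∀ i, μ * x (.inl i) = ∑ j, x (.inr j) -
      if h : (i : ℕ) < κ then x (.inr ⟨i, h.trans_le hκ2⟩) else 0 := fun i => by
    rw [← mulVec_adjMat_compl_B1_inl hκ2, h, Pi.smul_apply, smul_eq_mul]
  have hz : ∀ j, μ * x (.inr j) = ∑ i, x (.inl i) -
      if h : (j : ℕ) < κ then x (.inl ⟨j, h.trans_le hκ1⟩) else 0 := fun j => by
    rw [← mulVec_adjMat_compl_B1_inr hκ1, h, Pi.smul_apply, smul_eq_mul]
  have hyi := sq_sub_one_mul_eigen_eq_ite hκ1 hκ2 hy hz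
  have hzj := sq_sub_one_mul_eigen_eq_ite hκ2 hκ1 hz hy
  set S := ∑ i, x (.inl i)
  set S' := ∑ j, x (.inr j)
  have E1 : (μ ^ 2 - 1) * (μ * S) = κ * (μ * (μ * S' - S)) + (n1 - κ) * ((μ ^ 2 - 1) * S') := by
    rw [← Fin.sum_ite_val_lt hκ1, Finset.mul_sum, Finset.mul_sum]
    exact Finset.sum_congr rfl fun i _ => hyi i
  have E2 : (μ ^ 2 - 1) * (μ * S') = κ * (μ * (μ * S - S')) + (n2 - κ) * ((μ ^ 2 - 1) * S) := by
    rw [← Fin.sum_ite_val_lt hκ2, Finset.mul_sum, Finset.mul_sum]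
    exact Finset.sum_congr rfl fun j _ => hzj j
  set Q := (μ ^ 2) ^ 2 - (n1 * n2 - 2 * κ + 1) * μ ^ 2 + (n1 - κ) * (n2 - κ)
  -- `(μ ^ 2 - 1) * Q` is the determinant of the linear system `E1`, `E2` in `S`, `S'`
  have hS : (μ ^ 2 - 1) * Q * S = 0 := by
    linear_combination (μ * (μ ^ 2 - 1 + κ)) * E1 + (κ * μ ^ 2 + (n1 - κ) * (μ ^ 2 - 1)) * E2
  have hS' : (μ ^ 2 - 1) * Q * S' = 0 := by
    linear_combination (μ * (μ ^ 2 - 1 + κ)) * E2 + (κ * μ ^ 2 + (n2 - κ) * (μ ^ 2 - 1)) * E1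
  have hcoord : ∀ c, μ * (μ ^ 2 - 1) * ((μ ^ 2 - 1) * Q) * x c = 0 := by
    rintro (i | j)
    · have := hyi i
      split_ifs at this
      · linear_combination (μ ^ 2 - 1) * Q * this + μ ^ 2 * hS' - μ * hS
      · linear_combination (μ ^ 2 - 1) * Q * this + (μ ^ 2 - 1) * hS'
    · have := hzj j
      split_ifs at this
      · linear_combination (μ ^ 2 - 1) * Q * this + μ ^ 2 * hS - μ * hS'
      · linear_combination (μ ^ 2 - 1) * Q * this + (μ ^ 2 - 1) * hS
  obtain ⟨c, hc⟩ := Function.ne_iff.mp hx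
  have := (mul_eq_zero.mp (hcoord c)).resolve_right hc
  exact pow_eq_zero_iff two_ne_zero |>.mp (by linear_combination μ * Q * this)

lemma exists_eigenvector_of_quad_root (hκ1 : κ < n1) (hκ2 : κ ≤ n2) {μ : ℝ} (hμ : 1 < μ ^ 2)
    (hQ : (μ ^ 2) ^ 2 - (n1 * n2 - 2 * κ + 1) * μ ^ 2 + (n1 - κ) * (n2 - κ) = 0) :
    ∃ x, x ≠ 0 ∧ adjMat (B1 n1 n2 κ)ᶜ *ᵥ x = μ • x := by
  -- `(S, S') = μ (μ ^ 2 - 1) (s, t)` spans the kernel of the system of `eigenvalue_poly_eq_zero`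
  set s : ℝ := κ * μ ^ 2 + (n1 - κ) * (μ ^ 2 - 1)
  set t : ℝ := μ * (μ ^ 2 - 1 + κ)
  refine ⟨Sum.elim (fun i : Fin n1 => if (i : ℕ) < κ then μ * (μ * t - s) else (μ ^ 2 - 1) * t)
    (fun j : Fin n2 => if (j : ℕ) < κ then μ * (μ * s - t) else (μ ^ 2 - 1) * s), ?_, ?_⟩
  · refine Function.ne_iff.mpr ⟨.inl ⟨κ, hκ1⟩, ?_⟩
    have hμ0 : μ ≠ 0 := by rintro rfl; norm_num at hμ
    have : (0 : ℝ) ≤ κ := κ.cast_nonneg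
    simp only [Sum.elim_inl, lt_irrefl, if_false, Pi.zero_apply, t]
    exact mul_ne_zero (by linarith) (mul_ne_zero hμ0 (by linarith))
  · ext (i | j)
    · rw [mulVec_adjMat_compl_B1_inl hκ2]
      exact classConst_eigen_eq hκ2 (by linear_combination (-(μ ^ 2 - 1)) * hQ) i
    · rw [mulVec_adjMat_compl_B1_inr hκ1.le]
      exact classConst_eigen_eq hκ1.le (by ring) j

theorem minEig_adjMat_compl_B1 (hκ : 1 ≤ κ) (hκ1 : κ < n1) (hκ2 : κ ≤ n2)
    (h : κ + 2 < n1 + n2) :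
    minEig (adjMat (B1 n1 n2 κ)ᶜ) = -√(radiusSqComplB1 n1 n2 κ) := by
  have hk : (0 : ℝ) < κ := by exact_mod_cast hκ
  have hsum : (κ : ℝ) + 2 < n1 + n2 := by exact_mod_cast h
  have h1 := one_lt_radiusSqComplB1 hk hsum
  have hsq : (-√(radiusSqComplB1 n1 n2 κ)) ^ 2 = radiusSqComplB1 n1 n2 κ := by
    rw [neg_sq, Real.sq_sqrt (by linarith)]
  refine IsLeast.csInf_eq ⟨?_, ?_⟩
  · exact exists_eigenvector_of_quad_root hκ1 hκ2 (by rwa [hsq])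
      (by rw [hsq]; exact radiusSqComplB1_isRoot hk hsum)
  · rintro μ ⟨x, hx, hμ⟩
    apply Real.neg_sqrt_le_of_sq_le
    rcases mul_eq_zero.mp (eigenvalue_poly_eq_zero hκ1.le hκ2 hx hμ) with h0 | h0
    · rcases mul_eq_zero.mp h0 with h0 | h0
      · nlinarith
      · linarith
    · exact le_largestRoot h0.le

theorem minEig_adjMat_compl_B1_shift_lt (hκ : 1 ≤ κ) (hκ2 : κ ≤ n2) (h : n2 + 1 < n1) :
    minEig (adjMat (B1 (n1 - 1) (n2 + 1) κ)ᶜ) < minEig (adjMat (B1 n1 n2 κ)ᶜ) := by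
  rw [minEig_adjMat_compl_B1 hκ (by omega) (by omega) (by omega),
    minEig_adjMat_compl_B1 hκ (by omega) hκ2 (by omega), neg_lt_neg_iff,
    Nat.cast_sub (by omega : 1 ≤ n1), Nat.cast_add, Nat.cast_one]
  have hk : (0 : ℝ) < κ := by exact_mod_cast hκ
  have hsum : (κ : ℝ) + 2 < n1 + n2 := by exact_mod_cast (by omega : κ + 2 < n1 + n2)
  have hab : (n2 : ℝ) + 1 < n1 := by exact_mod_cast h
  exact Real.sqrt_lt_sqrt (zero_le_one.trans (one_lt_radiusSqComplB1 hk hsum).le)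
    (radiusSqComplB1_lt_sub_one_add_one hk hsum hab)

end B1

lemma balanced_le_of_shift_le {f : ℕ → ℕ → ℝ} {κ : ℕ}
    (hf : ∀ n1 n2, κ ≤ n2 → n2 + 1 < n1 → f (n1 - 1) (n2 + 1) ≤ f n1 n2) (n1 n2 : ℕ)
    (hκ : κ ≤ n2) (h : n2 ≤ n1) :
    f (n1 + n2 - (n1 + n2) / 2) ((n1 + n2) / 2) ≤ f n1 n2 := by
  induction n1 using Nat.strong_induction_on generalizing n2 with
  | _ n1 ih =>
    by_cases hshift : n2 + 1 < n1
    · have := ih (n1 - 1) (by omega) (n2 + 1) (by omega) (by omega)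
      rw [show n1 - 1 + (n2 + 1) = n1 + n2 by omega] at this
      exact this.trans (hf n1 n2 hκ hshift)
    · rw [show (n1 + n2) / 2 = n2 by omega, show n1 + n2 - n2 = n1 by omega]

/-- For `n1 > n2 + 1 ≥ κ + 1`, the least eigenvalue of the complement of `B1(n1, n2; κ)`
is strictly greater than that of the complement of `B1(n1−1, n2+1; κ)`. Consequently,
with `n1 + n2 = n` fixed and `n1 ≥ n2 ≥ κ`, the least eigenvalue of the complement is
minimized at `(n1, n2) = (⌈n/2⌉, ⌊n/2⌋)`. -/
theorem minEig_compl_B1_balanced_min (n κ : ℕ) (hκ : 1 ≤ κ) :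
    (∀ n1 n2 : ℕ, κ ≤ n2 → n2 + 1 < n1 →
      minEig (adjMat ((B1 (n1 - 1) (n2 + 1) κ)ᶜ)) < minEig (adjMat ((B1 n1 n2 κ)ᶜ))) ∧
    (∀ n1 n2 : ℕ, n1 + n2 = n → κ ≤ n2 → n2 ≤ n1 →
      minEig (adjMat ((B1 (n - n / 2) (n / 2) κ)ᶜ)) ≤ minEig (adjMat ((B1 n1 n2 κ)ᶜ))) := by
  refine ⟨fun _ _ => minEig_adjMat_compl_B1_shift_lt hκ, ?_⟩
  rintro n1 n2 rfl hκ2 h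
  exact balanced_le_of_shift_le (f := fun n1 n2 => minEig (adjMat (B1 n1 n2 κ)ᶜ))
    (fun _ _ h2 h => (minEig_adjMat_compl_B1_shift_lt hκ h2 h).le) n1 n2 hκ2 h
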